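/- Over the ring $B = \mathbb{Z}[q^{\pm1}, v_1^{\pm1}, \dots, v_m^{\pm1}][(q-1)^{-1}]$, the image of the centre of the affine Hecke algebra $H_2^{\mathrm{aff}}$ under the quotient map to the cyclotomic Hecke algebra $\mathcal{K}_2^{\mathbf v}$ is equal to the full centre of $\mathcal{K}_2^{\mathbf v}$. -/

import Mathlib

noncomputable section

/-- The ring `A = ℤ[q^{±1}, v₁^{±1}, …, v_m^{±1}]`, realized as the group
algebra of `ℤ × ℤ^m` over `ℤ`. -/
abbrev Av (m : ℕ) : Type := AddMonoidAlgebra ℤ (ℤ × (Fin m → ℤ))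

/-- The element `q`. -/
def qv (m : ℕ) : Av m := AddMonoidAlgebra.single (1, 0) 1

/-- The element `vᵢ`. -/
def vv (m : ℕ) (i : Fin m) : Av m := AddMonoidAlgebra.single (0, Pi.single i 1) 1

/-- The `j`-th elementary symmetric polynomial of `v₁, …, v_m`. -/
def ev (m : ℕ) (j : ℕ) : Av m :=
  ∑ s ∈ Finset.powersetCard j (Finset.univ : Finset (Fin m)), ∏ i ∈ s, vv m i

/-- The Laurent polynomial ring `A[X₁^{±1}, X₂^{±1}]`. -/
abbrev Lau (A : Type) [CommRing A] : Type := AddMonoidAlgebra A (ℤ × ℤ)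

variable (A : Type) [CommRing A]

/-- The monomial `X₁^i X₂^j`. -/
def Xm (i j : ℤ) : Lau A := AddMonoidAlgebra.single (i, j) 1

/-- The automorphism `s` interchanging `X₁` and `X₂`. -/
def sw (p : Lau A) : Lau A := AddMonoidAlgebra.ofCoeff (Finsupp.equivMapDomain (Equiv.prodComm ℤ ℤ) p.coeff)

/-- Constants. -/
def CC (a : A) : Lau A := algebraMap A (Lau A) a

/-- `p` is `m`-restricted. -/
def Res (m : ℕ) (p : Lau A) : Prop :=
  ∀ ab ∈ p.coeff.support, 0 ≤ ab.1 ∧ ab.1 ≤ (m : ℤ) - 1 ∧ 0 ≤ ab.2 ∧ ab.2 ≤ (m : ℤ) - 1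

/-- `f_v(X₁) = ∏ᵢ (X₁ - vᵢ)`. -/
def fv1 (m : ℕ) : Lau (Av m) := ∏ i : Fin m, (Xm (Av m) 1 0 - CC (Av m) (vv m i))

/-- `f_v(X₂) = ∏ᵢ (X₂ - vᵢ)`. -/
def fv2 (m : ℕ) : Lau (Av m) := ∏ i : Fin m, (Xm (Av m) 0 1 - CC (Av m) (vv m i))

/-- The complete homogeneous symmetric polynomial `H_k` in `X₁, X₂`. -/
def Hc (k : ℕ) : Lau A := ∑ i ∈ Finset.range (k + 1), Xm A (i : ℤ) ((k : ℤ) - (i : ℤ))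

/-- The element `z = (-1)^{m+1} e_m + X₁X₂ ∑_{j=0}^{m-2} (-1)^j e_j H_{m-2-j}`. -/
def zel (m : ℕ) : Lau (Av m) :=
  CC (Av m) ((-1 : Av m) ^ (m + 1) * ev m m) +
    Xm (Av m) 1 1 *
      ∑ j ∈ Finset.range (m - 1), CC (Av m) ((-1 : Av m) ^ j * ev m j) * Hc (Av m) (m - 2 - j)
/-- The ring `B = A[(q-1)⁻¹]`, the localization of `A` away from `q-1`. -/
abbrev Bv (m : ℕ) : Type := Localization.Away (qv m - 1)

/-- The element `q` of `B`. -/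
def qB (m : ℕ) : Bv m := algebraMap (Av m) (Bv m) (qv m)

/-- The element `vᵢ` of `B`. -/
def vB (m : ℕ) (i : Fin m) : Bv m := algebraMap (Av m) (Bv m) (vv m i)

/-- `f_v(X₁) = ∏ᵢ (X₁ - vᵢ)` over `B`. -/
def fv1B (m : ℕ) : Lau (Bv m) := ∏ i : Fin m, (Xm (Bv m) 1 0 - CC (Bv m) (vB m i))

/-!
Write a central `x` as `ι f + ι g * T` with `f`, `g` restricted. The Bernstein relation applied
to `P(X₁)` gives `ι (P(X₂)) * T = (q - 1) • ι (P(X₂) + z)` with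
`z = (X₁ P(X₂) - X₂ P(X₁)) / (X₂ - X₁)`. Commuting `x` with `X₁`, dividing `g X₁`, `g X₂` and
the resulting quotient times `z` by `P` with remainder, and comparing coefficients in the basis,
shows `ι g = ι (w * z)` for a Laurent polynomial `w`. Then `ι g * T` is the image of the symmetric
polynomial `q / (q - 1) • (w P(X₂) + s(w) P(X₁))`, so `ι f` commutes with `T`, and the Bernstein
relation together with the basis theorem forces `f` to be symmetric.
-/

open Polynomial (aeval)

section Laurent

variable {R : Type} [CommRing R]

lemma Xm_mul_Xm (a b c d : ℤ) : Xm R a b * Xm R c d = Xm R (a + c) (b + d) := by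
  simp [Xm, AddMonoidAlgebra.single_mul_single]

lemma Xm_pow (a b : ℤ) (n : ℕ) : Xm R a b ^ n = Xm R (n * a) (n * b) := by
  simp [Xm, AddMonoidAlgebra.single_pow]

lemma Xm_zero_zero : Xm R 0 0 = 1 := rfl

variable (R) in
def swapAlgEquiv : Lau R ≃ₐ[R] Lau R := AddMonoidAlgebra.domCongr R R (AddEquiv.prodComm)

@[simp]
lemma swapAlgEquiv_apply (p : Lau R) : swapAlgEquiv R p = sw R p := by
  ext; simp [sw, swapAlgEquiv]

lemma sw_Xm (a b : ℤ) : sw R (Xm R a b) = Xm R b a := by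
  rw [← swapAlgEquiv_apply, Xm, swapAlgEquiv, AddMonoidAlgebra.domCongr_single]; rfl

lemma sw_sw (p : Lau R) : sw R (sw R p) = p := by
  ext; simp [sw]

@[simp] lemma sw_zero : sw R (0 : Lau R) = 0 := by
  rw [← swapAlgEquiv_apply, map_zero]

@[simp] lemma sw_add (p r : Lau R) : sw R (p + r) = sw R p + sw R r := by
  simpa using map_add (swapAlgEquiv R) p r

@[simp] lemma sw_mul (p r : Lau R) : sw R (p * r) = sw R p * sw R r := by
  simpa using map_mul (swapAlgEquiv R) p r

@[simp] lemma sw_smul (c : R) (p : Lau R) : sw R (c • p) = c • sw R p := by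
  rw [← swapAlgEquiv_apply, map_smul, swapAlgEquiv_apply]

lemma sw_aeval_X1 (P : Polynomial R) : sw R (aeval (Xm R 1 0) P) = aeval (Xm R 0 1) P := by
  rw [← swapAlgEquiv_apply, ← Polynomial.aeval_algHom_apply, swapAlgEquiv_apply, sw_Xm]

lemma sw_aeval_X2 (P : Polynomial R) : sw R (aeval (Xm R 0 1) P) = aeval (Xm R 1 0) P := by
  rw [← sw_aeval_X1, sw_sw]

end Laurent

section Support

open scoped Pointwise

lemma AddMonoidAlgebra.mul_mem_supported {k G : Type*} [Semiring k] [Add G] {s t : Set G}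
    {p r : AddMonoidAlgebra k G} (hp : p ∈ supported k k s) (hr : r ∈ supported k k t) :
    p * r ∈ supported k k (s + t) := by
  classical
  rw [mem_supported] at *
  exact (Finset.coe_subset.2 (support_coeff_mul_subset p r)).trans
    (by rw [Finset.coe_add]; exact Set.add_subset_add hp hr)

variable {R : Type} [CommRing R]

variable (R) in
abbrev supportedIcc (a b : ℤ × ℤ) : Submodule R (Lau R) :=
  AddMonoidAlgebra.supported R R (Set.Icc a b)

variable (R) in
abbrev restricted (m : ℕ) : Submodule R (Lau R) := supportedIcc R 0 ((m : ℤ) - 1, (m : ℤ) - 1)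

lemma res_iff_mem_restricted {m : ℕ} {p : Lau R} : Res R m p ↔ p ∈ restricted R m := by
  simp only [Res, AddMonoidAlgebra.mem_supported, Set.subset_def, Finset.mem_coe, Set.mem_Icc,
    Prod.le_def, Prod.fst_zero, Prod.snd_zero]
  exact forall₂_congr fun _ _ ↦ by tauto

lemma supportedIcc_mono {a b a' b' : ℤ × ℤ} (ha : a' ≤ a) (hb : b ≤ b') :
    supportedIcc R a b ≤ supportedIcc R a' b' :=
  AddMonoidAlgebra.supported_mono (Set.Icc_subset_Icc ha hb)

lemma Xm_mem_supportedIcc {a b : ℤ × ℤ} {c d : ℤ} (h : (c, d) ∈ Set.Icc a b) :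
    Xm R c d ∈ supportedIcc R a b := by
  rw [AddMonoidAlgebra.mem_supported]
  exact (Finset.coe_subset.2 Finsupp.support_single_subset).trans (by simpa using h)

lemma mul_mem_supportedIcc {a b c d : ℤ × ℤ} {p r : Lau R} (hp : p ∈ supportedIcc R a b)
    (hr : r ∈ supportedIcc R c d) : p * r ∈ supportedIcc R (a + c) (b + d) :=
  AddMonoidAlgebra.supported_mono (Set.Icc_add_Icc_subset a b c d)
    (AddMonoidAlgebra.mul_mem_supported hp hr)

lemma sw_mem_supportedIcc {a b : ℤ × ℤ} {p : Lau R} (hp : p ∈ supportedIcc R a b) :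
    sw R p ∈ supportedIcc R a.swap b.swap := by
  simp only [AddMonoidAlgebra.mem_supported, Set.subset_def, Finset.mem_coe] at *
  intro c hc
  have := hp c.swap (by simpa [sw] using hc)
  simpa [Prod.le_def, and_comm] using this

lemma sw_mem_restricted {m : ℕ} {p : Lau R} (hp : p ∈ restricted R m) : sw R p ∈ restricted R m :=
  supportedIcc_mono (by simp) (by simp) (sw_mem_supportedIcc hp)

lemma supportedIcc_eq_span (a b : ℤ × ℤ) :
    supportedIcc R a b = Submodule.span R ((fun c : ℤ × ℤ ↦ Xm R c.1 c.2) '' Set.Icc a b) :=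
  AddMonoidAlgebra.supported_eq_span_single R _

end Support

section DividedDifference

variable {R : Type} [CommRing R]

lemma Xm_sub_Xm_eq_sum_mul (c : ℤ) (n : ℕ) :
    Xm R c (c + n) - Xm R (c + n) c =
      (∑ t ∈ Finset.range n, Xm R (c + t) (c + n - t)) * (1 - Xm R 1 0 * Xm R 0 (-1)) := by
  have step : ∀ t : ℕ, Xm R (c + t) (c + n - t) * (1 - Xm R 1 0 * Xm R 0 (-1)) =
      Xm R (c + t) (c + n - t) - Xm R (c + ↑(t + 1)) (c + n - ↑(t + 1)) := by
    intro t
    rw [mul_sub, mul_one, Xm_mul_Xm, Xm_mul_Xm]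
    congr 2 <;> push_cast <;> ring
  rw [Finset.sum_mul, Finset.sum_congr rfl fun t _ ↦ step t, Finset.sum_range_sub']
  congr 1 <;> simp

lemma exists_mul_eq_Xm_sub_Xm {a b c d : ℤ} (hc : c ∈ Set.Icc a b) (hd : d ∈ Set.Icc a b)
    (hcd : c ≤ d) : ∃ g ∈ supportedIcc R (a, a) (b, b),
      g * (1 - Xm R 1 0 * Xm R 0 (-1)) = Xm R c d - Xm R d c := by
  obtain ⟨n, rfl⟩ := Int.le.dest hcd
  refine ⟨_, Submodule.sum_mem _ fun t ht ↦ Xm_mem_supportedIcc ?_, (Xm_sub_Xm_eq_sum_mul c n).symm⟩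
  simp only [Finset.mem_range] at ht
  simp only [Set.mem_Icc, Prod.mk_le_mk] at hc hd ⊢
  omega

lemma exists_mul_eq_sub_sw {a b : ℤ} {f : Lau R} (hf : f ∈ supportedIcc R (a, a) (b, b)) :
    ∃ g ∈ supportedIcc R (a, a) (b, b), g * (1 - Xm R 1 0 * Xm R 0 (-1)) = f - sw R f := by
  rw [supportedIcc_eq_span] at hf
  induction hf using Submodule.span_induction with
  | mem x hx =>
    obtain ⟨⟨c, d⟩, ⟨⟨hac, had⟩, hcb, hdb⟩, rfl⟩ := hx
    rw [sw_Xm]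
    rcases le_total c d with hcd | hdc
    · exact exists_mul_eq_Xm_sub_Xm ⟨hac, hcb⟩ ⟨had, hdb⟩ hcd
    · obtain ⟨g, hg, hg_eq⟩ := exists_mul_eq_Xm_sub_Xm (R := R) ⟨had, hdb⟩ ⟨hac, hcb⟩ hdc
      exact ⟨-g, neg_mem hg, by rw [neg_mul, hg_eq, neg_sub]⟩
  | zero => exact ⟨0, zero_mem _, by rw [zero_mul, sw_zero, sub_zero]⟩
  | add x y _ _ hx hy =>
    obtain ⟨g, hg, hg_eq⟩ := hx
    obtain ⟨h, hh, hh_eq⟩ := hy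
    exact ⟨g + h, add_mem hg hh, by rw [add_mul, hg_eq, hh_eq, sw_add]; abel⟩
  | smul c x _ hx =>
    obtain ⟨g, hg, hg_eq⟩ := hx
    exact ⟨c • g, Submodule.smul_mem _ c hg, by rw [smul_mul_assoc, hg_eq, sw_smul, smul_sub]⟩

end DividedDifference

section Division

variable {R : Type} [CommRing R] {P : Polynomial R}

lemma aeval_X1_sub_Xm_mem (hP : P.Monic) :
    aeval (Xm R 1 0) P - Xm R P.natDegree 0 ∈ supportedIcc R 0 (P.natDegree - 1, 0) := by
  have hP_sum := hP.as_sum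
  set n := P.natDegree
  rw [hP_sum]
  simp only [map_add, map_pow, Polynomial.aeval_X, Xm_pow, map_sum, map_mul, Polynomial.aeval_C,
    mul_one, mul_zero, add_sub_cancel_left, ← Algebra.smul_def]
  refine Submodule.sum_mem _ fun i hi ↦ Submodule.smul_mem _ _ (Xm_mem_supportedIcc ?_)
  simp only [Finset.mem_range] at hi
  simp only [Set.mem_Icc, Prod.le_def, Prod.fst_zero, Prod.snd_zero]
  omega

/-- Division with remainder by the monic `P(X₁)`; the `X₂`-exponents are carried along. -/
lemma supportedIcc_le_map_mulRight_sup (hP : P.Monic) (k : ℕ) (e : ℤ) :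
    supportedIcc R 0 (P.natDegree - 1 + k, e) ≤
      (supportedIcc R 0 (k - 1, e)).map (LinearMap.mulRight R (aeval (Xm R 1 0) P)) ⊔
        supportedIcc R 0 (P.natDegree - 1, e) := by
  set m : ℤ := (P.natDegree : ℤ)
  set F := aeval (Xm R 1 0) P
  induction k with
  | zero => simp
  | succ k ih =>
    have mono : supportedIcc R 0 (m - 1 + k, e) ≤
        (supportedIcc R 0 (↑(k + 1) - 1, e)).map (LinearMap.mulRight R F) ⊔
          supportedIcc R 0 (m - 1, e) :=
      ih.trans (sup_le_sup_right (Submodule.map_mono (supportedIcc_mono le_rfl (by simp))) _)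
    rw [supportedIcc_eq_span, Submodule.span_le]
    rintro _ ⟨⟨c, d⟩, ⟨⟨hc, hd⟩, hcm, hde⟩, rfl⟩
    simp only [Prod.fst_zero, Prod.snd_zero] at hc hd hcm hde
    by_cases hck : c ≤ m - 1 + k
    · exact mono (Xm_mem_supportedIcc ⟨⟨hc, hd⟩, hck, hde⟩)
    have hc : c = k + m := by push_cast at hcm; omega
    have split : Xm R c d = Xm R k d * F - Xm R k d * (F - Xm R m 0) := by
      rw [mul_sub, sub_sub_cancel, Xm_mul_Xm, hc, add_zero]
    show Xm R c d ∈ _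
    rw [split]
    refine sub_mem (Submodule.mem_sup_left ⟨_, Xm_mem_supportedIcc ?_, rfl⟩) (mono ?_)
    · simp only [Set.mem_Icc, Prod.le_def, Prod.fst_zero, Prod.snd_zero]; push_cast; omega
    · refine supportedIcc_mono (by simp [Prod.le_def, hd]) ?_
        (mul_mem_supportedIcc (Xm_mem_supportedIcc (Set.left_mem_Icc.2 le_rfl))
          (aeval_X1_sub_Xm_mem hP))
      simp only [Prod.mk_add_mk, Prod.mk_le_mk]; omega

lemma exists_eq_mul_add_of_mem (hP : P.Monic) (k : ℕ) {p : Lau R}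
    (hp : p ∈ supportedIcc R 0 (P.natDegree - 1 + k, P.natDegree - 1)) :
    ∃ τ ∈ supportedIcc R 0 (k - 1, P.natDegree - 1), ∃ ζ ∈ restricted R P.natDegree,
      p = τ * aeval (Xm R 1 0) P + ζ := by
  obtain ⟨_, ⟨τ, hτ, rfl⟩, ζ, hζ, hp⟩ :=
    Submodule.mem_sup.1 (supportedIcc_le_map_mulRight_sup hP k _ hp)
  exact ⟨τ, hτ, ζ, hζ, hp.symm⟩

lemma exists_mul_X2_eq (hP : P.Monic) {g : Lau R} (hg : g ∈ restricted R P.natDegree) :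
    ∃ gh ∈ supportedIcc R 0 (P.natDegree - 1, 0), ∃ p ∈ restricted R P.natDegree,
      g * Xm R 0 1 = gh * aeval (Xm R 0 1) P + p := by
  have hgX2 : sw R (g * Xm R 0 1) ∈ supportedIcc R 0 (P.natDegree - 1 + (1 : ℕ), P.natDegree - 1) :=
    supportedIcc_mono (by simp [Prod.le_def]) (by simp) (sw_mem_supportedIcc
      (mul_mem_supportedIcc hg (Xm_mem_supportedIcc (Set.left_mem_Icc.2 le_rfl))))
  obtain ⟨τ, hτ, ζ, hζ, h⟩ := exists_eq_mul_add_of_mem hP 1 hgX2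
  refine ⟨sw R τ, ?_, sw R ζ, ?_, ?_⟩
  · exact supportedIcc_mono (by simp) (by simp) (sw_mem_supportedIcc hτ)
  · exact supportedIcc_mono (by simp) (by simp) (sw_mem_supportedIcc hζ)
  · simpa [sw_sw, sw_aeval_X1] using congrArg (sw R) h

end Division

section ZElement

variable {R : Type} [CommRing R]

lemma sub_mul_Hc (n : ℕ) :
    (Xm R 0 1 - Xm R 1 0) * Hc R n = Xm R 0 (n + 1) - Xm R (n + 1) 0 := by
  set f : ℕ → Lau R := fun i ↦ Xm R i (n + 1 - i)
  have step : ∀ i : ℕ, (Xm R 0 1 - Xm R 1 0) * Xm R i (n - i) = f i - f (i + 1) := by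
    intro i
    simp only [f, sub_mul, Xm_mul_Xm]
    congr 2 <;> push_cast <;> ring
  rw [Hc, Finset.mul_sum, Finset.sum_congr rfl fun i _ ↦ step i, Finset.sum_range_sub']
  simp [f]

lemma Hc_mem (n : ℕ) : Hc R n ∈ supportedIcc R 0 (n, n) :=
  Submodule.sum_mem _ fun i hi ↦ Xm_mem_supportedIcc (by
    simp only [Finset.mem_range] at hi
    simp only [Set.mem_Icc, Prod.le_def, Prod.fst_zero, Prod.snd_zero]
    omega)

/-- `zMonomial n = (X₁ X₂ⁿ - X₂ X₁ⁿ) / (X₂ - X₁)`. -/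
def zMonomial : ℕ → Lau R
  | 0 => -1
  | 1 => 0
  | n + 2 => Xm R 1 1 * Hc R n

lemma sub_mul_zMonomial (n : ℕ) :
    (Xm R 0 1 - Xm R 1 0) * zMonomial n = Xm R 1 n - Xm R n 1 := by
  match n with
  | 0 => simp [zMonomial]
  | 1 => simp [zMonomial]
  | n + 2 =>
    rw [zMonomial, mul_left_comm, sub_mul_Hc, mul_sub, Xm_mul_Xm, Xm_mul_Xm]
    congr 2 <;> push_cast <;> ring

lemma zMonomial_mem {m n : ℕ} (hm : 0 < m) (hn : n ≤ m) : zMonomial n ∈ restricted R m := by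
  match n with
  | 0 =>
    refine neg_mem (Xm_mem_supportedIcc (R := R) (c := 0) (d := 0) ?_)
    simp [Prod.le_def]; omega
  | 1 => exact zero_mem _
  | n + 2 =>
    have h : Xm R 1 1 * Hc R n ∈ supportedIcc R ((1, 1) + 0) ((1, 1) + ((n : ℤ), (n : ℤ))) :=
      mul_mem_supportedIcc (Xm_mem_supportedIcc (Set.left_mem_Icc.2 le_rfl)) (Hc_mem n)
    refine supportedIcc_mono ?_ ?_ h <;>
      simp only [add_zero, Prod.mk_add_mk, Prod.le_def, Prod.fst_zero, Prod.snd_zero] <;> omega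

variable (R) in
/-- `zPoly P = (X₁ P(X₂) - X₂ P(X₁)) / (X₂ - X₁)`; for `P = ∏ᵢ (X - vᵢ)` this is the element
`z` of `zel`. -/
def zPoly (P : Polynomial R) : Lau R := P.sum fun n a ↦ algebraMap R (Lau R) a * zMonomial n

lemma sub_mul_zPoly (P : Polynomial R) :
    (Xm R 0 1 - Xm R 1 0) * zPoly R P =
      Xm R 1 0 * aeval (Xm R 0 1) P - Xm R 0 1 * aeval (Xm R 1 0) P := by
  simp only [zPoly, Polynomial.aeval_def, Polynomial.eval₂_eq_sum, Polynomial.sum_def,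
    Finset.mul_sum, ← Finset.sum_sub_distrib]
  refine Finset.sum_congr rfl fun n _ ↦ ?_
  rw [mul_left_comm, sub_mul_zMonomial, Xm_pow, Xm_pow, mul_left_comm, mul_left_comm (Xm R 0 1),
    ← mul_sub, Xm_mul_Xm, Xm_mul_Xm]
  simp

lemma zPoly_mem {m : ℕ} (hm : 0 < m) {P : Polynomial R} (hP : P.natDegree ≤ m) :
    zPoly R P ∈ restricted R m :=
  Submodule.sum_mem _ fun n hn ↦ by
    show algebraMap R (Lau R) (P.coeff n) * zMonomial n ∈ _
    rw [← Algebra.smul_def]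
    exact Submodule.smul_mem _ _
      (zMonomial_mem hm ((Polynomial.le_natDegree_of_mem_supp n hn).trans hP))

end ZElement

section HeckeAlgebra

variable {R : Type} [CommRing R] {K : Type} [Ring K] [Algebra R K]

/-- `K` is the cyclotomic Hecke algebra with parameters `q`, `P` and basis `R_m ⊕ R_m T`: `ι` is the
image of the Laurent polynomial subalgebra of `H₂^aff` and `T` the image of its generator. -/
structure IsCyclotomicHecke (m : ℕ) (q : R) (P : Polynomial R) (ι : Lau R →ₐ[R] K) (T : K) :
    Prop where
  quadratic : (T - algebraMap R K q) * (T + 1) = 0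
  bernstein : ∀ f g : Lau R, g * (1 - Xm R 1 0 * Xm R 0 (-1)) = f - sw R f →
    T * ι f = ι (sw R f) * T + algebraMap R K (q - 1) * ι g
  cyclotomic : ι (aeval (Xm R 1 0) P) = 0
  basis : ∀ h : K, ∃! fg : Lau R × Lau R, Res R m fg.1 ∧ Res R m fg.2 ∧ h = ι fg.1 + ι fg.2 * T

namespace IsCyclotomicHecke

variable {m : ℕ} {q : R} {P : Polynomial R} {ι : Lau R →ₐ[R] K} {T : K}
  (H : IsCyclotomicHecke m q P ι T)
include H

lemma mul_T_mul_T (x : K) : x * T * T = (q - 1) • (x * T) + q • x := by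
  have h := congrArg (x * ·) H.quadratic
  simp only [sub_mul, mul_add, mul_sub, mul_one, mul_zero, ← mul_assoc, ← Algebra.commutes q,
    ← Algebra.smul_def, mul_smul_comm] at h
  linear_combination (norm := module) h

lemma bernstein_smul {f g : Lau R} (h : g * (1 - Xm R 1 0 * Xm R 0 (-1)) = f - sw R f) :
    T * ι f = ι (sw R f) * T + (q - 1) • ι g := by
  rw [H.bernstein f g h, Algebra.smul_def]

lemma T_mul_of_sw_eq {f : Lau R} (hf : sw R f = f) : T * ι f = ι f * T := by
  simpa [hf] using H.bernstein_smul (f := f) (g := 0) (by simp [hf])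

lemma T_mul_X1 : T * ι (Xm R 1 0) = ι (Xm R 0 1) * T - (q - 1) • ι (Xm R 0 1) := by
  have h : -Xm R 0 1 * (1 - Xm R 1 0 * Xm R 0 (-1)) = Xm R 1 0 - sw R (Xm R 1 0) := by
    rw [sw_Xm, neg_mul, mul_sub, mul_one, mul_left_comm, Xm_mul_Xm]
    simp [Xm_zero_zero]
  rw [H.bernstein_smul h, sw_Xm, map_neg, smul_neg, ← sub_eq_add_neg]

lemma aeval_X2_mul_T :
    ι (aeval (Xm R 0 1) P) * T = (q - 1) • ι (aeval (Xm R 0 1) P + zPoly R P) := by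
  have hX2 : Xm R 0 1 * Xm R 0 (-1) = 1 := by simp [Xm_mul_Xm, Xm_zero_zero]
  have h : -(aeval (Xm R 0 1) P + zPoly R P) * (1 - Xm R 1 0 * Xm R 0 (-1)) =
      aeval (Xm R 1 0) P - sw R (aeval (Xm R 1 0) P) := by
    rw [sw_aeval_X1]
    linear_combination (-Xm R 0 (-1)) * sub_mul_zPoly P + (zPoly R P + aeval (Xm R 1 0) P) * hX2
  have := H.bernstein_smul h
  rw [H.cyclotomic, sw_aeval_X1, map_neg, smul_neg, mul_zero] at this
  linear_combination (norm := module) -this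

lemma smul_mul_aeval_X2 (w : Lau R) :
    q • ι (w * aeval (Xm R 0 1) P) = (q - 1) • (ι (w * zPoly R P) * T) := by
  set A := ι (w * aeval (Xm R 0 1) P)
  set Z := ι (w * zPoly R P)
  have hA : A * T = (q - 1) • (A + Z) := by
    simp only [A, Z, map_mul, mul_assoc, H.aeval_X2_mul_T, mul_smul_comm, map_add, mul_add]
  have h := H.mul_T_mul_T A
  rw [hA, smul_mul_assoc, add_mul, hA] at h
  linear_combination (norm := module) -h

lemma eq_zero_of_add_mul_T_eq_zero {a b : Lau R} (ha : a ∈ restricted R m)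
    (hb : b ∈ restricted R m) (h : ι a + ι b * T = 0) : a = 0 ∧ b = 0 := by
  obtain ⟨_, _, huniq⟩ := H.basis 0
  have res_zero : Res R m 0 := res_iff_mem_restricted.2 (zero_mem _)
  have hab := huniq (a, b) ⟨res_iff_mem_restricted.2 ha, res_iff_mem_restricted.2 hb, h.symm⟩
  have h0 := huniq (0, 0) ⟨res_zero, res_zero, by simp⟩
  exact Prod.ext_iff.1 (hab.trans h0.symm)

lemma exists_restricted_eq (hP : P.Monic) (hPm : P.natDegree = m) (k : ℕ) {p : Lau R}
    (hp : p ∈ supportedIcc R 0 (m - 1 + k, m - 1)) : ∃ ζ ∈ restricted R m, ι p = ι ζ := by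
  subst hPm
  obtain ⟨τ, -, ζ, hζ, rfl⟩ := exists_eq_mul_add_of_mem hP k hp
  exact ⟨ζ, hζ, by simp [H.cyclotomic]⟩

lemma mul_X2_mul_T_of_commute {f g : Lau R} (hx : Commute (ι f + ι g * T) (ι (Xm R 1 0))) :
    ι (g * Xm R 0 1) * T = (q - 1) • ι (g * Xm R 0 1) + ι (g * Xm R 1 0) * T := by
  have h := hx.eq
  rw [add_mul, mul_add, mul_assoc (ι g), H.T_mul_X1, mul_sub, mul_smul_comm, ← mul_assoc,
    ← mul_assoc, ← map_mul, ← map_mul, ← map_mul, ← map_mul, mul_comm (Xm R 1 0) f,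
    mul_comm (Xm R 1 0) g] at h
  linear_combination (norm := module) h

lemma eq_and_eq_of_mul_T_eq (hq : IsUnit q) (hq1 : IsUnit (q - 1)) {Y : K} {p₁ p₂ ζ : Lau R}
    (hp₁ : p₁ ∈ restricted R m) (hp₂ : p₂ ∈ restricted R m) (hζ : ζ ∈ restricted R m)
    (hY : Y * T = (q - 1) • Y + ι p₁ * T) (hqY : q • Y = q • ι p₂ + (q - 1) • (ι ζ * T)) :
    ζ = p₂ ∧ p₂ = p₁ := by
  have hqYT := congrArg (· * T) hqY
  simp only [smul_mul_assoc, add_mul] at hqYT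
  have hTT := H.mul_T_mul_T (ι ζ)
  have hzero : ι (((q - 1) * q) • (ζ - p₂)) + ι (q • (p₂ - p₁)) * T = 0 := by
    simp only [map_smul, map_sub, smul_mul_assoc, sub_mul]
    linear_combination (norm := module) q • hY - hqYT + (q - 1) • hqY - (q - 1) • hTT
  obtain ⟨h₁, h₂⟩ := H.eq_zero_of_add_mul_T_eq_zero (Submodule.smul_mem _ _ (sub_mem hζ hp₂))
    (Submodule.smul_mem _ _ (sub_mem hp₂ hp₁)) hzero
  rw [(hq1.mul hq).smul_eq_zero, sub_eq_zero] at h₁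
  rw [hq.smul_eq_zero, sub_eq_zero] at h₂
  exact ⟨h₁, h₂⟩

lemma exists_eq_mul_zPoly (hq : IsUnit q) (hq1 : IsUnit (q - 1)) (hP : P.Monic)
    (hPm : P.natDegree = m) (hm : 0 < m) {f g : Lau R} (hg : g ∈ restricted R m)
    (hx : Commute (ι f + ι g * T) (ι (Xm R 1 0))) : ∃ w, ι g = ι (w * zPoly R P) := by
  subst hPm
  obtain ⟨gh, hgh, p₂, hp₂, hgX₂⟩ := exists_mul_X2_eq hP hg
  have hgX₁_mem : g * Xm R 1 0 ∈ supportedIcc R 0 (P.natDegree - 1 + (1 : ℕ), P.natDegree - 1) :=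
    supportedIcc_mono (by simp [Prod.le_def]) (by simp)
      (mul_mem_supportedIcc hg (Xm_mem_supportedIcc (Set.left_mem_Icc.2 le_rfl)))
  have hghz_mem : gh * zPoly R P ∈
      supportedIcc R 0 (P.natDegree - 1 + P.natDegree, P.natDegree - 1) :=
    supportedIcc_mono (by simp) (by simp [Prod.le_def])
      (mul_mem_supportedIcc hgh (zPoly_mem hm le_rfl))
  obtain ⟨p₁, hp₁, hgX₁⟩ := H.exists_restricted_eq hP rfl 1 hgX₁_mem
  obtain ⟨ζ, hζ, hghz⟩ := H.exists_restricted_eq hP rfl P.natDegree hghz_mem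
  have hY := H.mul_X2_mul_T_of_commute hx
  rw [hgX₁] at hY
  have hqY : q • ι (g * Xm R 0 1) = q • ι p₂ + (q - 1) • (ι ζ * T) := by
    rw [hgX₂, map_add, smul_add, H.smul_mul_aeval_X2, hghz, add_comm]
  obtain ⟨hζp₂, hp₂p₁⟩ := H.eq_and_eq_of_mul_T_eq hq hq1 hp₁ hp₂ hζ hY hqY
  refine ⟨gh * Xm R (-1) 0, ?_⟩
  calc ι g = ι (g * Xm R 1 0) * ι (Xm R (-1) 0) := by
        rw [← map_mul, mul_assoc, Xm_mul_Xm]; simp [Xm_zero_zero]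
    _ = ι (gh * zPoly R P) * ι (Xm R (-1) 0) := by rw [hgX₁, ← hp₂p₁, ← hζp₂, hghz]
    _ = ι (gh * Xm R (-1) 0 * zPoly R P) := by rw [← map_mul, mul_right_comm]

lemma exists_sw_eq_ι_eq_mul_zPoly_mul_T (hq1 : IsUnit (q - 1)) (w : Lau R) :
    ∃ F, sw R F = F ∧ ι F = ι (w * zPoly R P) * T := by
  set u : R := ↑hq1.unit⁻¹
  refine ⟨(u * q) • (w * aeval (Xm R 0 1) P + sw R w * aeval (Xm R 1 0) P), ?_, ?_⟩
  · rw [sw_smul, sw_add, sw_mul, sw_mul, sw_sw, sw_aeval_X1, sw_aeval_X2, add_comm]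
  · rw [map_smul, map_add, map_mul ι (sw R w), H.cyclotomic, mul_zero, add_zero, mul_smul,
      H.smul_mul_aeval_X2, smul_smul, IsUnit.val_inv_mul, one_smul]

lemma sw_eq_of_commute_T {f : Lau R} (hf : f ∈ restricted R m) (hTf : Commute T (ι f)) :
    sw R f = f := by
  obtain ⟨d, hd, hd_eq⟩ := exists_mul_eq_sub_sw hf
  have hzero : ι ((q - 1) • d) + ι (sw R f - f) * T = 0 := by
    rw [map_smul, map_sub, sub_mul, ← hTf.eq, H.bernstein_smul hd_eq]
    abel
  exact sub_eq_zero.1 (H.eq_zero_of_add_mul_T_eq_zero (Submodule.smul_mem _ _ hd)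
    (sub_mem (sw_mem_restricted hf) hf) hzero).2

theorem exists_sw_eq_ι_eq_of_mem_center (hq : IsUnit q) (hq1 : IsUnit (q - 1)) (hP : P.Monic)
    (hPm : P.natDegree = m) {x : K} (hx : x ∈ Set.center K) : ∃ f, sw R f = f ∧ ι f = x := by
  rcases Nat.eq_zero_or_pos m with rfl | hm
  · have h10 : (1 : K) = 0 := by
      simpa [Polynomial.Monic.natDegree_eq_zero hP |>.1 hPm] using H.cyclotomic
    exact ⟨0, sw_zero, by rw [map_zero, ← mul_one x, h10, mul_zero]⟩
  obtain ⟨⟨f, g⟩, ⟨hf, hg, rfl⟩, -⟩ := H.basis x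
  rw [res_iff_mem_restricted] at hf hg
  have hx_comm := (Set.mem_center_iff.1 hx).comm
  obtain ⟨w, hw⟩ := H.exists_eq_mul_zPoly hq hq1 hP hPm hm hg (hx_comm _)
  obtain ⟨F, hF, hιF⟩ := H.exists_sw_eq_ι_eq_mul_zPoly_mul_T hq1 w
  rw [← hw] at hιF
  have hTf : Commute T (ι f) := by
    simpa [← hιF] using (hx_comm T).symm.sub_right (H.T_mul_of_sw_eq hF)
  exact ⟨f + F, by rw [sw_add, H.sw_eq_of_commute_T hf hTf, hF], by rw [map_add, hιF]⟩

end IsCyclotomicHecke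

end HeckeAlgebra

section Specialization

variable {m : ℕ}

instance : Nontrivial (Bv m) := by
  have hq : qv m - 1 ≠ 0 := by
    rw [sub_ne_zero, qv, AddMonoidAlgebra.one_def, Ne, AddMonoidAlgebra.single_left_inj one_ne_zero]
    simp
  exact (IsLocalization.injective (Bv m)
    (powers_le_nonZeroDivisors_of_noZeroDivisors hq)).nontrivial

lemma isUnit_qB : IsUnit (qB m) := by
  refine (isUnit_iff_exists_inv.2 ⟨AddMonoidAlgebra.single (-1, 0) 1, ?_⟩).map
    (algebraMap (Av m) (Bv m))
  simp [qv, AddMonoidAlgebra.single_mul_single]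
  rfl

lemma isUnit_qB_sub_one : IsUnit (qB m - 1) := by
  simpa [qB] using IsLocalization.Away.algebraMap_isUnit (S := Bv m) (qv m - 1)

lemma fv1B_eq_aeval :
    fv1B m = aeval (Xm (Bv m) 1 0) (∏ i, (Polynomial.X - Polynomial.C (vB m i))) := by
  simp [fv1B, CC]

end Specialization

theorem stmt15_general (m : ℕ)
    (K : Type) [Ring K] [Algebra (Bv m) K]
    (ι : Lau (Bv m) →ₐ[Bv m] K) (T : K)
    (hquad : (T - algebraMap (Bv m) K (qB m)) * (T + 1) = 0)
    (hcomm : ∀ f g : Lau (Bv m),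
      g * (1 - Xm (Bv m) 1 0 * Xm (Bv m) 0 (-1)) = f - sw (Bv m) f →
      T * ι f = ι (sw (Bv m) f) * T + algebraMap (Bv m) K (qB m - 1) * ι g)
    (hcyc : ι (fv1B m) = 0)
    (hfree : ∀ h : K, ∃! fg : Lau (Bv m) × Lau (Bv m),
      Res (Bv m) m fg.1 ∧ Res (Bv m) m fg.2 ∧ h = ι fg.1 + ι fg.2 * T) :
    ∀ x ∈ Set.center K, ∃ f : Lau (Bv m), sw (Bv m) f = f ∧ ι f = x := by
  rw [fv1B_eq_aeval] at hcyc
  intro x hx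
  exact IsCyclotomicHecke.exists_sw_eq_ι_eq_of_mem_center ⟨hquad, hcomm, hcyc, hfree⟩
    isUnit_qB isUnit_qB_sub_one
    (Polynomial.monic_prod_of_monic _ _ fun i _ ↦ Polynomial.monic_X_sub_C _) (by simp) hx

theorem stmt15 (m : ℕ)
    (K : Type) [Ring K] [Algebra (Bv m) K]
    (ι : Lau (Bv m) →ₐ[Bv m] K) (T : K)
    (hquad : (T - algebraMap (Bv m) K (qB m)) * (T + 1) = 0)
    (hTX : T * ι (Xm (Bv m) 1 0) * T = algebraMap (Bv m) K (qB m) * ι (Xm (Bv m) 0 1))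
    (hcomm : ∀ f g : Lau (Bv m),
      g * (1 - Xm (Bv m) 1 0 * Xm (Bv m) 0 (-1)) = f - sw (Bv m) f →
      T * ι f = ι (sw (Bv m) f) * T + algebraMap (Bv m) K (qB m - 1) * ι g)
    (hcyc : ι (fv1B m) = 0)
    (hfree : ∀ h : K, ∃! fg : Lau (Bv m) × Lau (Bv m),
      Res (Bv m) m fg.1 ∧ Res (Bv m) m fg.2 ∧ h = ι fg.1 + ι fg.2 * T) :
    ∀ x ∈ Set.center K, ∃ f : Lau (Bv m), sw (Bv m) f = f ∧ ι f = x :=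
  stmt15_general m K ι T hquad hcomm hcyc hfree
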